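/- Let A be a packing bound function, let 1 ≤ n ≤ d, and let C ⊆ ℝ^d be a bounded Borel set whose upper n-dimensional Minkowski content is finite. Then limsup_{r → ∞} A(rC)/r^n < ∞. -/

import Mathlib

/-!
Fix a large `r` and a maximal `2`-separated subset `T` of `4r • C`. It is a `3`-net of `4r • C`,
so the mesh axiom with `ε = 3` and the union axiom give `A (r • C) ≤ A T = #T`. The unit balls
around the points of `T` are disjoint and lie in the `1`-thickening of `4r • C`, the dilate by
`4r` of the `(4r)⁻¹`-thickening of `C`. Finite Minkowski content bounds the volume of the latter
by `O((4r)⁻¹ ^ (d - n))`, hence `#T = O((4r) ^ d (4r)⁻¹ ^ (d - n)) = O(r ^ n)`.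
-/

open scoped Pointwise
open MeasureTheory Bornology Filter

/-- A packing bound function: an assignment of a nonnegative real number to every bounded
Borel subset of every Euclidean space, satisfying the sphere bound, Lipschitz, union,
and mesh axioms. -/
structure PackingBoundFunction where
  toFun : ∀ d : ℕ, Set (EuclideanSpace ℝ (Fin d)) → ℝ
  nonneg : ∀ (d : ℕ) (C : Set (EuclideanSpace ℝ (Fin d))),
    IsBounded C → MeasurableSet C → 0 ≤ toFun d C
  sphere_bound : ∀ (d : ℕ) (C : Set (EuclideanSpace ℝ (Fin d))),
    IsBounded C → MeasurableSet C → C.Nonempty →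
    (∃ z, C ⊆ Metric.ball z 1) → toFun d C = 1
  lipschitz : ∀ (d d' : ℕ) (C : Set (EuclideanSpace ℝ (Fin d)))
    (C' : Set (EuclideanSpace ℝ (Fin d'))),
    IsBounded C → MeasurableSet C → IsBounded C' → MeasurableSet C' →
    (∃ ψ : EuclideanSpace ℝ (Fin d) → EuclideanSpace ℝ (Fin d'),
      (∀ x ∈ C, ψ x ∈ C') ∧ ∀ x ∈ C, ∀ y ∈ C, dist x y ≤ dist (ψ x) (ψ y)) →
    toFun d C ≤ toFun d' C'
  union : ∀ (d : ℕ) (C C' : Set (EuclideanSpace ℝ (Fin d))),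
    IsBounded C → MeasurableSet C → IsBounded C' → MeasurableSet C' →
    (∀ x ∈ C, ∀ x' ∈ C', 2 ≤ dist x x') →
    toFun d (C ∪ C') = toFun d C + toFun d C'
  mesh : ∀ (ε : ℝ), 0 < ε → ∀ (d : ℕ) (C C' : Set (EuclideanSpace ℝ (Fin d))),
    IsBounded C → MeasurableSet C → IsBounded C' → MeasurableSet C' →
    C ⊆ Metric.thickening ε C' →
    toFun d ((1 / (1 + ε)) • C) ≤ toFun d C'

open Metric Set Topology
open scoped ENNReal NNReal

local notation "ℝ^" d:max => EuclideanSpace ℝ (Fin d)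

lemma TotallyBounded.packingNumber_ne_top {X : Type*} [PseudoEMetricSpace X] {s : Set X}
    (hs : TotallyBounded s) {ε : ℝ≥0} (hε : ε ≠ 0) : packingNumber ε s ≠ ⊤ := by
  obtain ⟨N, -, hNfin, hN⟩ := exists_finite_isCover_of_totallyBounded (half_pos hε.bot_lt).ne' hs
  refine ne_top_of_le_ne_top (Set.encard_ne_top_iff.mpr hNfin) ?_
  calc packingNumber ε s = packingNumber (2 * (ε / 2)) s := by rw [mul_div_cancel₀ _ two_ne_zero]
    _ ≤ externalCoveringNumber (ε / 2) s := packingNumber_two_mul_le_externalCoveringNumber _ _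
    _ ≤ N.encard := hN.externalCoveringNumber_le_encard

lemma TotallyBounded.exists_finset_separated_subset_thickening {X : Type*} [PseudoMetricSpace X]
    {s : Set X} (hs : TotallyBounded s) {ε : ℝ≥0} (hε : ε ≠ 0) {δ : ℝ} (hεδ : ε < δ) :
    ∃ T : Finset X, ↑T ⊆ s ∧ (T : Set X).Pairwise (fun x y => ε ≤ dist x y) ∧
      s ⊆ thickening δ T := by
  have hfin := hs.packingNumber_ne_top hε
  have hTfin : (maximalSeparatedSet ε s).Finite :=
    Set.encard_ne_top_iff.mp (by rwa [encard_maximalSeparatedSet hfin])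
  refine ⟨hTfin.toFinset, by simpa using maximalSeparatedSet_subset, ?_, ?_⟩
  · intro x hx y hy hxy
    have h : (ε : ℝ≥0∞) < edist x y :=
      isSeparated_maximalSeparatedSet (by simpa using hx) (by simpa using hy) hxy
    rw [edist_nndist, ENNReal.coe_lt_coe, ← NNReal.coe_lt_coe, coe_nndist] at h
    exact h.le
  · refine (isCover_iff_subset_iUnion_closedBall.mp (isCover_maximalSeparatedSet hfin)).trans ?_
    refine iUnion₂_subset fun y hy => (closedBall_subset_ball hεδ).trans ?_
    exact ball_subset_thickening (by simpa using hy) δ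

lemma Finset.card_mul_measure_ball_le_measure_thickening {E : Type*} [NormedAddCommGroup E]
    [MeasurableSpace E] [BorelSpace E] (μ : Measure E) [μ.IsAddHaarMeasure] {T : Finset E}
    {s : Set E} {δ : ℝ} (hTs : ↑T ⊆ s) (hT : (T : Set E).Pairwise fun x y => 2 * δ ≤ dist x y) :
    T.card * μ (ball 0 δ) ≤ μ (thickening δ s) := by
  have hdisj : (T : Set E).PairwiseDisjoint (ball · δ) := fun x hx y hy hxy =>
    ball_disjoint_ball (by linarith [hT hx hy hxy])
  calc T.card * μ (ball 0 δ) = ∑ t ∈ T, μ (ball t δ) := by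
        simp [Measure.addHaar_ball_center]
    _ = μ (⋃ t ∈ T, ball t δ) := (measure_biUnion_finset hdisj fun _ _ => measurableSet_ball).symm
    _ ≤ μ (thickening δ s) :=
        measure_mono (iUnion₂_subset fun _ ht => ball_subset_thickening (hTs ht) δ)

lemma smul_thickening {𝕜 E : Type*} [NormedField 𝕜] [SeminormedAddCommGroup E]
    [NormedSpace 𝕜 E] {c : 𝕜} (hc : c ≠ 0) (δ : ℝ) (s : Set E) :
    c • thickening δ s = thickening (‖c‖ * δ) (c • s) := by
  simp_rw [thickening_eq_biUnion_ball, smul_set_iUnion₂, _root_.smul_ball hc, ← image_smul,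
    biUnion_image]

lemma MeasureTheory.Measure.addHaar_thickening_smul {E : Type*} [NormedAddCommGroup E]
    [NormedSpace ℝ E] [MeasurableSpace E] [BorelSpace E] [FiniteDimensional ℝ E] (μ : Measure E)
    [μ.IsAddHaarMeasure] {c : ℝ} (hc : 0 < c) (δ : ℝ) (s : Set E) :
    μ (thickening (c * δ) (c • s)) =
      ENNReal.ofReal (c ^ Module.finrank ℝ E) * μ (thickening δ s) := by
  have h := smul_thickening (E := E) hc.ne' δ s
  rw [Real.norm_of_nonneg hc.le] at h
  rw [← h, Measure.addHaar_smul, abs_of_pos (by positivity)]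

lemma ENNReal.exists_eventually_le_mul_of_limsup_div_ne_top {α : Type*} {l : Filter α}
    {f g : α → ℝ≥0∞} (h : limsup (fun x => f x / g x) l ≠ ⊤) :
    ∃ K ≠ ⊤, ∀ᶠ x in l, f x ≤ K * g x := by
  set K := limsup (fun x => f x / g x) l + 1
  have hK : K ≠ ⊤ := ENNReal.add_ne_top.mpr ⟨h, ENNReal.one_ne_top⟩
  refine ⟨K, hK, ?_⟩
  filter_upwards [eventually_lt_of_limsup_lt (ENNReal.lt_add_right h one_ne_zero)] with x hx
  exact (ENNReal.div_le_iff_le_mul (.inr hK) (.inr (by positivity))).mp hx.le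

lemma ofReal_pow_mul_volume_ball_inv {n d : ℕ} (hnd : n ≤ d) {ρ : ℝ} (hρ : 0 < ρ) :
    ENNReal.ofReal (ρ ^ d) * volume (ball (0 : ℝ^(d - n)) ρ⁻¹)
      = ENNReal.ofReal (ρ ^ n) * volume (ball (0 : ℝ^(d - n)) 1) := by
  rw [Measure.addHaar_ball_of_pos _ _ (inv_pos.mpr hρ), finrank_euclideanSpace_fin, ← mul_assoc,
    ← ENNReal.ofReal_mul (by positivity), ← Nat.add_sub_cancel' hnd, pow_add,
    Nat.add_sub_cancel_left, inv_pow, mul_assoc, mul_inv_cancel₀ (by positivity), mul_one]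

namespace PackingBoundFunction

variable (A : PackingBoundFunction) {d : ℕ}

lemma toFun_empty : A.toFun d ∅ = 0 := by
  have h := A.union d ∅ ∅ isBounded_empty MeasurableSet.empty isBounded_empty
    MeasurableSet.empty (by simp)
  rw [union_empty] at h
  linarith

lemma toFun_singleton (x : ℝ^d) : A.toFun d {x} = 1 :=
  A.sphere_bound d {x} isBounded_singleton (measurableSet_singleton x) (singleton_nonempty x)
    ⟨x, singleton_subset_iff.mpr (mem_ball_self one_pos)⟩

lemma toFun_eq_card (T : Finset (ℝ^d)) (hT : (T : Set (ℝ^d)).Pairwise fun x y => 2 ≤ dist x y) :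
    A.toFun d T = T.card := by
  classical
  induction T using Finset.induction_on with
  | empty => simpa using A.toFun_empty
  | insert a T ha ih =>
    rw [Finset.coe_insert, pairwise_insert_of_notMem (by simpa using ha)] at hT
    have hfar : ∀ x ∈ ({a} : Set (ℝ^d)), ∀ y ∈ (T : Set (ℝ^d)), 2 ≤ dist x y := by
      simpa using fun y hy => (hT.2 y hy).1
    rw [Finset.coe_insert, insert_eq, A.union d _ _ isBounded_singleton
      (measurableSet_singleton a) T.finite_toSet.isBounded T.finite_toSet.measurableSet hfar,
      A.toFun_singleton, ih hT.1, Finset.card_insert_of_notMem ha]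
    push_cast
    ring

lemma ofReal_toFun_mul_volume_ball_le {s : Set (ℝ^d)} (hs : IsBounded s)
    (hsm : MeasurableSet s) :
    ENNReal.ofReal (A.toFun d ((1 / (1 + 3) : ℝ) • s)) * volume (ball (0 : ℝ^d) 1)
      ≤ volume (thickening 1 s) := by
  have hs' : TotallyBounded s := hs.isCompact_closure.totallyBounded.subset subset_closure
  obtain ⟨T, hTs, hTsep, hcover⟩ :=
    hs'.exists_finset_separated_subset_thickening two_ne_zero (δ := 3) (by norm_num)
  calc ENNReal.ofReal (A.toFun d ((1 / (1 + 3) : ℝ) • s)) * volume (ball (0 : ℝ^d) 1)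
      ≤ ENNReal.ofReal (A.toFun d T) * volume (ball (0 : ℝ^d) 1) := by
        gcongr
        exact A.mesh 3 (by norm_num) d s T hs hsm T.finite_toSet.isBounded
          T.finite_toSet.measurableSet hcover
    _ = T.card * volume (ball (0 : ℝ^d) 1) := by
        rw [A.toFun_eq_card T (by simpa using hTsep), ENNReal.ofReal_natCast]
    _ ≤ volume (thickening 1 s) :=
        T.card_mul_measure_ball_le_measure_thickening volume hTs (by simpa using hTsep)

lemma ofReal_toFun_smul_mul_volume_ball_le {C : Set (ℝ^d)} (hCb : IsBounded C)
    (hCm : MeasurableSet C) {r : ℝ} (hr : 0 < r) :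
    ENNReal.ofReal (A.toFun d (r • C)) * volume (ball (0 : ℝ^d) 1)
      ≤ ENNReal.ofReal ((4 * r) ^ d) * volume (thickening (4 * r)⁻¹ C) :=
  calc ENNReal.ofReal (A.toFun d (r • C)) * volume (ball (0 : ℝ^d) 1)
      = ENNReal.ofReal (A.toFun d ((1 / (1 + 3) : ℝ) • (4 * r) • C)) *
          volume (ball (0 : ℝ^d) 1) := by
        rw [smul_smul]; ring_nf
    _ ≤ volume (thickening 1 ((4 * r) • C)) :=
        A.ofReal_toFun_mul_volume_ball_le (hCb.smul₀ _) (hCm.const_smul₀ _)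
    _ = ENNReal.ofReal ((4 * r) ^ d) * volume (thickening (4 * r)⁻¹ C) := by
        rw [← mul_inv_cancel₀ (by positivity : 4 * r ≠ 0),
          Measure.addHaar_thickening_smul volume (by positivity), finrank_euclideanSpace_fin]

lemma toFun_smul_le_of_volume_thickening_le {n : ℕ} (hnd : n ≤ d) {C : Set (ℝ^d)}
    (hCb : IsBounded C) (hCm : MeasurableSet C) {r : ℝ} (hr : 0 < r) {K : ℝ≥0∞} (hK : K ≠ ⊤)
    (hvol : volume (thickening (4 * r)⁻¹ C) ≤ K * volume (ball (0 : ℝ^(d - n)) (4 * r)⁻¹)) :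
    A.toFun d (r • C) ≤
      (K * volume (ball (0 : ℝ^(d - n)) 1) / volume (ball (0 : ℝ^d) 1)).toReal * (4 * r) ^ n := by
  set vd := volume (ball (0 : ℝ^d) 1)
  set vm := volume (ball (0 : ℝ^(d - n)) 1)
  have hvd : vd ≠ 0 := (measure_ball_pos volume _ one_pos).ne'
  have key : ENNReal.ofReal (A.toFun d (r • C)) * vd ≤ K * vm * ENNReal.ofReal ((4 * r) ^ n) :=
    calc ENNReal.ofReal (A.toFun d (r • C)) * vd
        ≤ ENNReal.ofReal ((4 * r) ^ d) * volume (thickening (4 * r)⁻¹ C) :=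
          A.ofReal_toFun_smul_mul_volume_ball_le hCb hCm hr
      _ ≤ ENNReal.ofReal ((4 * r) ^ d) * (K * volume (ball (0 : ℝ^(d - n)) (4 * r)⁻¹)) := by
          gcongr
      _ = K * vm * ENNReal.ofReal ((4 * r) ^ n) := by
          rw [mul_left_comm, ofReal_pow_mul_volume_ball_inv hnd (by positivity)]
          ring
  rw [← ENNReal.toReal_ofReal (by positivity : 0 ≤ (4 * r) ^ n), ← ENNReal.toReal_mul]
  refine (ENNReal.ofReal_le_iff_le_toReal ?_).mp ?_
  · exact ENNReal.mul_ne_top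
      (ENNReal.div_ne_top (ENNReal.mul_ne_top hK measure_ball_lt_top.ne) hvd) ENNReal.ofReal_ne_top
  · rwa [← ENNReal.mul_div_right_comm, ENNReal.le_div_iff_mul_le (.inl hvd)
      (.inl measure_ball_lt_top.ne)]

end PackingBoundFunction

theorem packingBoundFunction_limsup_finite_general (A : PackingBoundFunction) (n d : ℕ)
    (hnd : n ≤ d)
    (C : Set (EuclideanSpace ℝ (Fin d))) (hCb : IsBounded C) (hCm : MeasurableSet C)
    (hfin : Filter.limsup (fun ε : ℝ =>
        volume (Metric.thickening ε C) /
          volume (Metric.ball (0 : EuclideanSpace ℝ (Fin (d - n))) ε))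
      (nhdsWithin 0 (Set.Ioi 0)) ≠ ⊤) :
    Filter.IsBoundedUnder (· ≤ ·) Filter.atTop
      (fun r : ℝ => A.toFun d (r • C) / r ^ n) := by
  obtain ⟨K, hK, hKC⟩ := ENNReal.exists_eventually_le_mul_of_limsup_div_ne_top hfin
  have hscale : Tendsto (fun r : ℝ => (4 * r)⁻¹) atTop (𝓝[>] 0) :=
    tendsto_inv_atTop_nhdsGT_zero.comp (tendsto_id.const_mul_atTop four_pos)
  refine isBoundedUnder_of_eventually_le (a :=
    (K * volume (ball (0 : ℝ^(d - n)) 1) / volume (ball (0 : ℝ^d) 1)).toReal * 4 ^ n) ?_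
  filter_upwards [hscale.eventually hKC, eventually_gt_atTop 0] with r hvol hr
  rw [div_le_iff₀ (by positivity), mul_assoc, ← mul_pow]
  exact A.toFun_smul_le_of_volume_thickening_le hnd hCb hCm hr hK hvol

/-- If `C ⊆ ℝ^d` is a bounded Borel set with finite upper `n`-dimensional
Minkowski content, then `limsup_{r → ∞} A(rC)/r^n < ∞`, i.e., `r ↦ A(rC)/r^n` is
eventually bounded above. -/
theorem packingBoundFunction_limsup_finite (A : PackingBoundFunction) (n d : ℕ)
    (hn : 1 ≤ n) (hnd : n ≤ d)
    (C : Set (EuclideanSpace ℝ (Fin d))) (hCb : IsBounded C) (hCm : MeasurableSet C)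
    (hfin : Filter.limsup (fun ε : ℝ =>
        volume (Metric.thickening ε C) /
          volume (Metric.ball (0 : EuclideanSpace ℝ (Fin (d - n))) ε))
      (nhdsWithin 0 (Set.Ioi 0)) ≠ ⊤) :
    Filter.IsBoundedUnder (· ≤ ·) Filter.atTop
      (fun r : ℝ => A.toFun d (r • C) / r ^ n) :=
  packingBoundFunction_limsup_finite_general A n d hnd C hCb hCm hfin
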